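/- Suppose |e^{A^c t} x| ≤ K e^{γ|t|}|x| for all t ∈ ℝ and |e^{A^s t} y| ≤ K e^{−β t}|y| for t ≥ 0 with β > γ ≥ 0, K ≥ 1. Then for any η with γ < η < β, the operator T on the space of continuous functions Y: (−∞, 0] → ℝ^m with sup_{t≤0} e^{η t}|Y(t)| < ∞ defined by (TY)(t) = ∫_{−∞}^t e^{A^s(t−τ)} G(τ) dτ, where G is continuous with sup_{τ≤0} e^{η τ}|G(τ)| = M < ∞, yields a well-defined element with sup_{t≤0} e^{η t}|(TY)(t)| ≤ K M/(β − η). -/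

import Mathlib

open MeasureTheory Set

/-! The stable kernel decays like `e^{-β(t-τ)}` while the weight allows `G τ` to grow like
`e^{-ητ}`; their product is `e^{-ηt} e^{-(β-η)(t-τ)}`, whose integral over `τ ≤ t` is
`e^{-ηt}/(β-η)` because `η < β`. -/

variable {E : Type*} [NormedAddCommGroup E]

lemma exp_neg_mul_sub (c t τ : ℝ) :
    Real.exp (-c * (t - τ)) = Real.exp (-c * t) * Real.exp (c * τ) := by
  rw [← Real.exp_add]
  ring_nf

lemma integrableOn_exp_neg_mul_sub_Iic {c : ℝ} (hc : 0 < c) (t : ℝ) :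
    IntegrableOn (fun τ => Real.exp (-c * (t - τ))) (Iic t) := by
  simp_rw [exp_neg_mul_sub]
  exact (integrableOn_exp_mul_Iic hc t).const_mul _

lemma integral_exp_neg_mul_sub_Iic {c : ℝ} (hc : 0 < c) (t : ℝ) :
    ∫ τ in Iic t, Real.exp (-c * (t - τ)) = 1 / c := by
  simp_rw [exp_neg_mul_sub]
  rw [integral_const_mul, integral_exp_mul_Iic hc, mul_div_assoc', ← Real.exp_add]
  simp

lemma integrableOn_Iic_of_norm_le_exp_neg_mul_sub {f : ℝ → E} {C c t : ℝ} (hc : 0 < c)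
    (hf : AEStronglyMeasurable f (volume.restrict (Iic t)))
    (hle : ∀ τ ≤ t, ‖f τ‖ ≤ C * Real.exp (-c * (t - τ))) :
    IntegrableOn f (Iic t) := by
  refine ((integrableOn_exp_neg_mul_sub_Iic hc t).const_mul C).mono' hf ?_
  filter_upwards [ae_restrict_mem measurableSet_Iic] with τ hτ using hle τ hτ

variable [NormedSpace ℝ E]

lemma norm_integral_Iic_le_of_norm_le_exp_neg_mul_sub {f : ℝ → E} {C c t : ℝ} (hc : 0 < c)
    (hle : ∀ τ ≤ t, ‖f τ‖ ≤ C * Real.exp (-c * (t - τ))) :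
    ‖∫ τ in Iic t, f τ‖ ≤ C / c := by
  calc ‖∫ τ in Iic t, f τ‖ ≤ ∫ τ in Iic t, C * Real.exp (-c * (t - τ)) := by
        refine norm_integral_le_of_norm_le
          ((integrableOn_exp_neg_mul_sub_Iic hc t).const_mul C) ?_
        filter_upwards [ae_restrict_mem measurableSet_Iic] with τ hτ using hle τ hτ
    _ = C / c := by rw [integral_const_mul, integral_exp_neg_mul_sub_Iic hc, mul_one_div]

lemma continuous_exp_sub_smul_apply [CompleteSpace E] (A : E →L[ℝ] E) {G : ℝ → E}
    (hG : Continuous G) (t : ℝ) :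
    Continuous fun τ => NormedSpace.exp ((t - τ) • A) (G τ) :=
  ((differentiable_exp_smul_const ℝ A).continuous.comp
    (continuous_const.sub continuous_id)).clm_apply hG

lemma norm_exp_sub_smul_apply_le {A : E →L[ℝ] E} {K β η M t τ : ℝ} {y : E} (hK : 0 ≤ K)
    (hA : ‖NormedSpace.exp ((t - τ) • A) y‖ ≤ K * Real.exp (-β * (t - τ)) * ‖y‖)
    (hy : Real.exp (η * τ) * ‖y‖ ≤ M) :
    ‖NormedSpace.exp ((t - τ) • A) y‖
      ≤ K * M * Real.exp (-η * t) * Real.exp (-(β - η) * (t - τ)) := by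
  have hy' : ‖y‖ ≤ M * Real.exp (-η * τ) := by
    rw [neg_mul, Real.exp_neg, ← div_eq_mul_inv, le_div_iff₀ (Real.exp_pos _), mul_comm]
    exact hy
  calc ‖NormedSpace.exp ((t - τ) • A) y‖
      ≤ K * Real.exp (-β * (t - τ)) * (M * Real.exp (-η * τ)) :=
        hA.trans (mul_le_mul_of_nonneg_left hy' (by positivity))
    _ = K * M * Real.exp (-η * t) * Real.exp (-(β - η) * (t - τ)) := by
        have hexp : Real.exp (-β * (t - τ)) * Real.exp (-η * τ)
            = Real.exp (-η * t) * Real.exp (-(β - η) * (t - τ)) := by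
          rw [← Real.exp_add, ← Real.exp_add]
          ring_nf
        linear_combination K * M * hexp

theorem stmt15_general (m : ℕ)
    (As : EuclideanSpace ℝ (Fin m) →L[ℝ] EuclideanSpace ℝ (Fin m))
    (K β η M : ℝ) (hK : 1 ≤ K)
    (hηβ : η < β)
    (hAs : ∀ t : ℝ, 0 ≤ t → ∀ y : EuclideanSpace ℝ (Fin m),
      ‖NormedSpace.exp (t • As) y‖ ≤ K * Real.exp (-β * t) * ‖y‖)
    (G : ℝ → EuclideanSpace ℝ (Fin m)) (hG : Continuous G)
    (hGM : ∀ τ : ℝ, τ ≤ 0 → Real.exp (η * τ) * ‖G τ‖ ≤ M) :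
    ∀ t : ℝ, t ≤ 0 →
      IntegrableOn (fun τ => NormedSpace.exp ((t - τ) • As) (G τ)) (Set.Iic t) ∧
      Real.exp (η * t) * ‖∫ τ in Set.Iic t, NormedSpace.exp ((t - τ) • As) (G τ)‖
        ≤ K * M / (β - η) := by
  intro t ht
  have hβη : 0 < β - η := sub_pos.mpr hηβ
  have hbound : ∀ τ ≤ t, ‖NormedSpace.exp ((t - τ) • As) (G τ)‖
      ≤ K * M * Real.exp (-η * t) * Real.exp (-(β - η) * (t - τ)) := fun τ hτ =>
    norm_exp_sub_smul_apply_le (zero_le_one.trans hK) (hAs _ (sub_nonneg.mpr hτ) _)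
      (hGM τ (hτ.trans ht))
  refine ⟨integrableOn_Iic_of_norm_le_exp_neg_mul_sub hβη
    (continuous_exp_sub_smul_apply As hG t).aestronglyMeasurable hbound, ?_⟩
  calc Real.exp (η * t) * ‖∫ τ in Set.Iic t, NormedSpace.exp ((t - τ) • As) (G τ)‖
      ≤ Real.exp (η * t) * (K * M * Real.exp (-η * t) / (β - η)) := by
        gcongr
        exact norm_integral_Iic_le_of_norm_le_exp_neg_mul_sub hβη hbound
    _ = K * M / (β - η) := by
        rw [neg_mul, Real.exp_neg]
        field_simp

/-- Lyapunov–Perron boundedness estimate. Suppose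
`‖e^{A^c t} x‖ ≤ K e^{γ|t|} ‖x‖` for all `t` and `‖e^{A^s t} y‖ ≤ K e^{-β t} ‖y‖` for
`t ≥ 0`, with `β > γ ≥ 0`, `K ≥ 1`, and let `γ < η < β`. If `G : ℝ → ℝ^m` is continuous
with `e^{ητ} ‖G τ‖ ≤ M` for `τ ≤ 0`, then for every `t ≤ 0` the integral
`(TY)(t) = ∫_{-∞}^t e^{A^s (t-τ)} G τ dτ` is well defined and
`e^{η t} ‖(TY)(t)‖ ≤ K M / (β - η)`. -/
theorem stmt15 (n m : ℕ)
    (Ac : EuclideanSpace ℝ (Fin n) →L[ℝ] EuclideanSpace ℝ (Fin n))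
    (As : EuclideanSpace ℝ (Fin m) →L[ℝ] EuclideanSpace ℝ (Fin m))
    (K γ β η M : ℝ) (hK : 1 ≤ K) (hγ : 0 ≤ γ) (hγβ : γ < β)
    (hγη : γ < η) (hηβ : η < β) (hM : 0 ≤ M)
    (hAc : ∀ t : ℝ, ∀ x : EuclideanSpace ℝ (Fin n),
      ‖NormedSpace.exp (t • Ac) x‖ ≤ K * Real.exp (γ * |t|) * ‖x‖)
    (hAs : ∀ t : ℝ, 0 ≤ t → ∀ y : EuclideanSpace ℝ (Fin m),
      ‖NormedSpace.exp (t • As) y‖ ≤ K * Real.exp (-β * t) * ‖y‖)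
    (G : ℝ → EuclideanSpace ℝ (Fin m)) (hG : Continuous G)
    (hGM : ∀ τ : ℝ, τ ≤ 0 → Real.exp (η * τ) * ‖G τ‖ ≤ M) :
    ∀ t : ℝ, t ≤ 0 →
      IntegrableOn (fun τ => NormedSpace.exp ((t - τ) • As) (G τ)) (Set.Iic t) ∧
      Real.exp (η * t) * ‖∫ τ in Set.Iic t, NormedSpace.exp ((t - τ) • As) (G τ)‖
        ≤ K * M / (β - η) :=
  stmt15_general m As K β η M hK hηβ hAs G hG hGM
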